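/- arXiv:1410.6225 — 2 statements merged into one kernel-verified Lean document; each statement's English description precedes it below -/
import Mathlib

section
/- Let A, B, C, D > 0 be real constants and q ∈ (3,5). Then the function g(t) = A t^4 + B t^{q-1} - C t^2 - D has exactly one zero on (0, ∞). -/
/-!
Dividing by `t ^ 2`, the zeros of `g` on `(0, ∞)` are those of
`A t ^ 2 + B t ^ (q - 3) - C - D / t ^ 2`, which is strictly increasing there because every
term is nondecreasing and `A t ^ 2` strictly so; hence there is at most one zero. One zero
exists by the intermediate value theorem, since `g 0 = -D < 0` and `g` is positive at
`1 + (C + D) / A`.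
-/

open Set

noncomputable def quarticRpow (A B C D q t : ℝ) : ℝ :=
  A * t ^ (4 : ℕ) + B * t ^ (q - 1) - C * t ^ 2 - D

noncomputable def quarticRpowDivSq (A B C D q t : ℝ) : ℝ :=
  A * t ^ 2 + B * t ^ (q - 3) - C - D / t ^ 2

section

variable {A B C D q : ℝ}

lemma sq_mul_quarticRpowDivSq {t : ℝ} (ht : 0 < t) :
    t ^ 2 * quarticRpowDivSq A B C D q t = quarticRpow A B C D q t := by
  have hpow : t ^ 2 * t ^ (q - 3) = t ^ (q - 1) := by
    rw [← Real.rpow_natCast, ← Real.rpow_add ht]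
    norm_num
    ring_nf
  unfold quarticRpowDivSq quarticRpow
  field_simp
  rw [← hpow]
  ring

lemma quarticRpow_eq_zero_iff {t : ℝ} (ht : 0 < t) :
    quarticRpow A B C D q t = 0 ↔ quarticRpowDivSq A B C D q t = 0 := by
  rw [← sq_mul_quarticRpowDivSq ht, mul_eq_zero, or_iff_right (pow_ne_zero 2 ht.ne')]

lemma strictMonoOn_quarticRpowDivSq (hA : 0 < A) (hB : 0 ≤ B) (hD : 0 ≤ D) (hq : 3 ≤ q) :
    StrictMonoOn (quarticRpowDivSq A B C D q) (Ioi 0) := by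
  intro s (hs : 0 < s) t _ hst
  have hsq : s ^ 2 < t ^ 2 := by gcongr
  have hrpow : s ^ (q - 3) ≤ t ^ (q - 3) := Real.rpow_le_rpow hs.le hst.le (by linarith)
  have hinv : D / t ^ 2 ≤ D / s ^ 2 := by gcongr
  unfold quarticRpowDivSq
  nlinarith [mul_le_mul_of_nonneg_left hrpow hB]

lemma continuous_quarticRpow (hq : 1 ≤ q) : Continuous (quarticRpow A B C D q) := by
  unfold quarticRpow
  have := Real.continuous_rpow_const (q := q - 1) (by linarith)
  fun_prop

lemma exists_pos_quarticRpow_eq_zero (hA : 0 < A) (hB : 0 ≤ B) (hC : 0 ≤ C) (hD : 0 < D)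
    (hq : 1 < q) : ∃ t, 0 < t ∧ quarticRpow A B C D q t = 0 := by
  set b := 1 + (C + D) / A
  have hb : 1 ≤ b := le_add_of_nonneg_right (by positivity)
  have hAb : C + D ≤ A * (b - 1) := by
    simp only [b, add_sub_cancel_left]
    rw [mul_div_cancel₀ _ hA.ne']
  have hg0 : quarticRpow A B C D q 0 = -D := by
    simp [quarticRpow, Real.zero_rpow (by linarith : q - 1 ≠ 0)]
  -- `C b ^ 2 + D ≤ (C + D) b ^ 2 ≤ A (b - 1) b ^ 2 < A b ^ 4`, as `b ≥ 1`
  have hgb : 0 < quarticRpow A B C D q b := by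
    have hrpow : 0 ≤ b ^ (q - 1) := Real.rpow_nonneg (by linarith) _
    have hb2 : 0 ≤ b ^ 2 - 1 := sub_nonneg.mpr (one_le_pow₀ hb)
    have hAb2 : 0 < A * b ^ 2 := by positivity
    unfold quarticRpow
    nlinarith [mul_le_mul_of_nonneg_left hAb (by positivity : (0 : ℝ) ≤ b ^ 2),
      mul_nonneg hB hrpow, mul_nonneg hD.le hb2,
      mul_nonneg hAb2.le (by nlinarith : 0 ≤ b ^ 2 - b)]
  obtain ⟨c, hc, hgc⟩ := intermediate_value_Icc (by linarith : (0 : ℝ) ≤ b)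
    (continuous_quarticRpow hq.le).continuousOn (show (0 : ℝ) ∈ Icc _ _ by
      rw [hg0]; exact ⟨by linarith, hgb.le⟩)
  refine ⟨c, hc.1.lt_of_ne ?_, hgc⟩
  rintro rfl
  linarith

end

theorem stmt_1_general (A B C D q : ℝ) (hA : 0 < A) (hB : 0 < B) (hC : 0 < C) (hD : 0 < D)
    (hq1 : 3 < q) :
    ∃! t : ℝ, 0 < t ∧ A * t ^ (4 : ℕ) + B * t ^ (q - 1) - C * t ^ 2 - D = 0 := by
  obtain ⟨c, hc, hgc⟩ := exists_pos_quarticRpow_eq_zero hA hB.le hC.le hD (by linarith)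
  have hmono := strictMonoOn_quarticRpowDivSq (C := C) hA hB.le hD.le hq1.le
  refine ⟨c, ⟨hc, hgc⟩, fun t ⟨ht, hgt⟩ => hmono.injOn ht hc ?_⟩
  rw [(quarticRpow_eq_zero_iff ht).mp hgt, (quarticRpow_eq_zero_iff hc).mp hgc]

/-- For positive reals `A, B, C, D` and `q ∈ (3,5)`, the function
`g t = A * t ^ 4 + B * t ^ (q - 1) - C * t ^ 2 - D` has exactly one zero on `(0, ∞)`. -/
theorem stmt_1 (A B C D q : ℝ) (hA : 0 < A) (hB : 0 < B) (hC : 0 < C) (hD : 0 < D)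
    (hq1 : 3 < q) (hq2 : q < 5) :
    ∃! t : ℝ, 0 < t ∧ A * t ^ (4 : ℕ) + B * t ^ (q - 1) - C * t ^ 2 - D = 0 :=
  stmt_1_general A B C D q hA hB hC hD hq1
end

section
/- Let a, b, cₙ be sequences of reals with a > 0 fixed, b > 0 fixed, tₙ ≥ 0 satisfying (a)tₙ + (b)tₙ³ = λ tₙ⁵ + 2βₙ tₙ^q with λ > 0, q > 3, βₙ → ∞ and tₙ > 0 for each n. Then tₙ → 0 and βₙ tₙ^{q-1} is bounded. -/
open Filter

/-!
Dividing the equation by `tₙ > 0` gives `2 βₙ tₙ^{q-1} = a + b tₙ² - λ tₙ⁴`, and the quadratic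
`a + b s - λ s²` is bounded above by `a + b² / (4λ)`. Hence `tₙ^{q-1} ≤ M / βₙ → 0`, so `tₙ → 0`.
-/

lemma add_mul_sub_mul_sq_le (a b lam s : ℝ) (hlam : 0 < lam) :
    a + b * s - lam * s ^ 2 ≤ a + b ^ 2 / (4 * lam) := by
  have hgap : a + b ^ 2 / (4 * lam) - (a + b * s - lam * s ^ 2) =
      (2 * lam * s - b) ^ 2 / (4 * lam) := by
    field_simp
    ring
  have : 0 ≤ (2 * lam * s - b) ^ 2 / (4 * lam) := by positivity
  linarith

lemma two_mul_mul_rpow_sub_one_of_eq {a b lam q β t : ℝ} (ht : 0 < t)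
    (heq : a * t + b * t ^ 3 = lam * t ^ 5 + 2 * β * t ^ q) :
    2 * β * t ^ (q - 1) = a + b * t ^ 2 - lam * (t ^ 2) ^ 2 := by
  rw [Real.rpow_sub_one ht.ne']
  field_simp
  linear_combination -heq

lemma tendsto_nhds_zero_of_rpow {α : Type*} {l : Filter α} {u : α → ℝ} {p : ℝ}
    (hu : ∀ x, 0 ≤ u x) (hp : 0 < p) (h : Tendsto (fun x => u x ^ p) l (nhds 0)) :
    Tendsto u l (nhds 0) := by
  have hroot := h.rpow_const (p := p⁻¹) (Or.inr (inv_pos.mpr hp).le)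
  rw [Real.zero_rpow (inv_pos.mpr hp).ne'] at hroot
  simpa only [Real.rpow_rpow_inv (hu _) hp.ne'] using hroot

lemma tendsto_nhds_zero_of_mul_le_of_tendsto_atTop {α : Type*} {l : Filter α} {u β : α → ℝ}
    {M : ℝ} (hβ : Tendsto β l atTop) (hu : ∀ x, 0 ≤ u x) (hM : ∀ x, β x * u x ≤ M) :
    Tendsto u l (nhds 0) := by
  have hle : ∀ᶠ x in l, u x ≤ M / β x := by
    filter_upwards [hβ.eventually_gt_atTop 0] with x hx
    rw [le_div_iff₀ hx, mul_comm]
    exact hM x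
  exact tendsto_of_tendsto_of_tendsto_of_le_of_le' tendsto_const_nhds
    (tendsto_const_nhds.div_atTop hβ) (Eventually.of_forall hu) hle

theorem stmt_8_general (a b lam q : ℝ) (hlam : 0 < lam) (hq : 3 < q)
    (β t : ℕ → ℝ) (hβ : Tendsto β atTop atTop)
    (ht : ∀ n, 0 < t n)
    (heq : ∀ n, a * t n + b * t n ^ 3 = lam * t n ^ 5 + 2 * β n * t n ^ q) :
    Tendsto t atTop (nhds 0) ∧ ∃ M : ℝ, ∀ n, β n * t n ^ (q - 1) ≤ M := by
  have hbound : ∀ n, β n * t n ^ (q - 1) ≤ (a + b ^ 2 / (4 * lam)) / 2 := fun n => by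
    have hsq := add_mul_sub_mul_sq_le a b lam (t n ^ 2) hlam
    linarith [two_mul_mul_rpow_sub_one_of_eq (ht n) (heq n)]
  refine ⟨?_, _, hbound⟩
  exact tendsto_nhds_zero_of_rpow (fun n => (ht n).le) (by linarith)
    (tendsto_nhds_zero_of_mul_le_of_tendsto_atTop hβ
      (fun n => Real.rpow_nonneg (ht n).le _) hbound)

/-- If `a, b, λ > 0`, `q > 3`, `βₙ → ∞`, `tₙ > 0` and
`a tₙ + b tₙ³ = λ tₙ⁵ + 2 βₙ tₙ^q` for every `n`, then `tₙ → 0` and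
`βₙ tₙ^{q-1}` is bounded. -/
theorem stmt_8 (a b lam q : ℝ) (ha : 0 < a) (hb : 0 < b) (hlam : 0 < lam) (hq : 3 < q)
    (β t : ℕ → ℝ) (hβ : Tendsto β atTop atTop) (hβpos : ∀ n, 0 < β n)
    (ht : ∀ n, 0 < t n)
    (heq : ∀ n, a * t n + b * t n ^ 3 = lam * t n ^ 5 + 2 * β n * t n ^ q) :
    Tendsto t atTop (nhds 0) ∧ ∃ M : ℝ, ∀ n, β n * t n ^ (q - 1) ≤ M :=
  stmt_8_general a b lam q hlam hq β t hβ ht heq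
end
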